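/- (Theorem 3.7, effects on in-sample evaluation: relabeling perturbs expectations by at most the smoothness bound.) Let ρ be a probability measure on ℝⁿ, let δ ≥ 0, and let g : ℝⁿ → ℝⁿ be measurable with ‖g(x) − x‖ ≤ δ for ρ-almost every x. Assume x ↦ ‖x‖ and x ↦ ‖g(x)‖ are ρ-integrable, and let Q : ℝⁿ → ℝ satisfy the NTK smoothness property with constant C ≥ 0. Then |∫ Q(g(x)) dρ(x) − ∫ Q(x) dρ(x)| ≤ C·(√(min(∫ ‖g(x)‖ dρ(x), ∫ ‖x‖ dρ(x)))·√δ + 2δ). -/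

import Mathlib

/-!
Integrating the smoothness bound against `ρ`, with `‖g x - x‖ ≤ δ`, bounds the difference by
`C (E √(min ‖g x‖ ‖x‖) √δ + 2δ)`; Jensen's inequality for the concave square root moves the
expectation under the root, and `E min ≤ min E`. Both expectations of `Q` are finite because the
bound at `y = 0` gives `Q` linear growth.
-/

open MeasureTheory

/-- `Q` satisfies the NTK smoothness property with constant `C`
(Lemma A.3 of the paper, taken as a hypothesis). -/
def NTKSmooth {n : ℕ} (Q : EuclideanSpace ℝ (Fin n) → ℝ) (C : ℝ) : Prop :=
  ∀ x y, |Q x - Q y| ≤ C * (Real.sqrt (min ‖x‖ ‖y‖) * Real.sqrt ‖x - y‖ + 2 * ‖x - y‖)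

theorem Real.sqrt_le_one_add_abs (t : ℝ) : Real.sqrt t ≤ 1 + |t| := by
  rw [Real.sqrt_le_left (by positivity)]
  nlinarith [le_abs_self t, abs_nonneg t]

section RealIntegral

variable {α : Type*} [MeasurableSpace α] {μ : Measure α} {f g : α → ℝ}

theorem MeasureTheory.Integrable.sqrt [IsFiniteMeasure μ] (hf : Integrable f μ) :
    Integrable (fun a => Real.sqrt (f a)) μ := by
  refine ((integrable_const 1).add hf.abs).mono'
    (Real.continuous_sqrt.comp_aestronglyMeasurable hf.1) (ae_of_all _ fun a => ?_)
  rw [Real.norm_of_nonneg (Real.sqrt_nonneg _)]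
  exact Real.sqrt_le_one_add_abs (f a)

theorem integral_sqrt_le_sqrt_integral [IsProbabilityMeasure μ] (hf₀ : ∀ᵐ a ∂μ, 0 ≤ f a)
    (hf : Integrable f μ) : ∫ a, Real.sqrt (f a) ∂μ ≤ Real.sqrt (∫ a, f a ∂μ) :=
  Real.strictConcaveOn_sqrt.concaveOn.le_map_integral Real.continuous_sqrt.continuousOn
    isClosed_Ici hf₀ hf hf.sqrt

theorem integral_min_le_min_integral (hf : Integrable f μ) (hg : Integrable g μ) :
    ∫ a, min (f a) (g a) ∂μ ≤ min (∫ a, f a ∂μ) (∫ a, g a ∂μ) :=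
  le_min (integral_mono (hf.inf hg) hf fun _ => min_le_left _ _)
    (integral_mono (hf.inf hg) hg fun _ => min_le_right _ _)

end RealIntegral

namespace NTKSmooth

variable {n : ℕ} {Q : EuclideanSpace ℝ (Fin n) → ℝ} {C : ℝ}

theorem continuous (hQ : NTKSmooth Q C) : Continuous Q := by
  refine continuous_iff_continuousAt.2 fun x => tendsto_iff_norm_sub_tendsto_zero.2 ?_
  have hbound : Continuous fun y =>
      C * (Real.sqrt (min ‖y‖ ‖x‖) * Real.sqrt ‖y - x‖ + 2 * ‖y - x‖) := by
    fun_prop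
  exact squeeze_zero (fun _ => norm_nonneg _) (fun y => hQ y x) (by simpa using hbound.tendsto x)

theorem abs_le (hQ : NTKSmooth Q C) (x : EuclideanSpace ℝ (Fin n)) :
    |Q x| ≤ |Q 0| + 2 * C * ‖x‖ := by
  have h := hQ x 0
  simp only [norm_zero, sub_zero, min_eq_right (norm_nonneg x), Real.sqrt_zero, zero_mul,
    zero_add] at h
  linarith [abs_sub_abs_le_abs_sub (Q x) (Q 0)]

theorem integrable_comp (hQ : NTKSmooth Q C) {α : Type*} [MeasurableSpace α] {μ : Measure α}
    [IsFiniteMeasure μ] {f : α → EuclideanSpace ℝ (Fin n)}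
    (hf : AEMeasurable f μ) (hfi : Integrable (fun a => ‖f a‖) μ) :
    Integrable (fun a => Q (f a)) μ :=
  ((integrable_const |Q 0|).add (hfi.const_mul (2 * C))).mono'
    (hQ.continuous.comp_aestronglyMeasurable hf.aestronglyMeasurable)
    (ae_of_all _ fun a => by
      simpa only [Real.norm_eq_abs, Pi.add_apply, mul_assoc] using hQ.abs_le (f a))

theorem abs_sub_le_of_norm_sub_le (hC : 0 ≤ C) (hQ : NTKSmooth Q C)
    {x y : EuclideanSpace ℝ (Fin n)} {δ : ℝ} (hxy : ‖x - y‖ ≤ δ) :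
    |Q x - Q y| ≤ C * (Real.sqrt (min ‖x‖ ‖y‖) * Real.sqrt δ + 2 * δ) :=
  (hQ x y).trans (by gcongr)

end NTKSmooth

theorem relabeling_perturbs_expectation_general {n : ℕ}
    (ρ : Measure (EuclideanSpace ℝ (Fin n))) [IsProbabilityMeasure ρ]
    (δ : ℝ)
    (g : EuclideanSpace ℝ (Fin n) → EuclideanSpace ℝ (Fin n)) (hg : Measurable g)
    (hclose : ∀ᵐ x ∂ρ, ‖g x - x‖ ≤ δ)
    (hint : Integrable (fun x => ‖x‖) ρ)
    (hintg : Integrable (fun x => ‖g x‖) ρ)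
    (Q : EuclideanSpace ℝ (Fin n) → ℝ) (C : ℝ) (hC : 0 ≤ C)
    (hQ : NTKSmooth Q C) :
    |(∫ x, Q (g x) ∂ρ) - ∫ x, Q x ∂ρ| ≤
      C * (Real.sqrt (min (∫ x, ‖g x‖ ∂ρ) (∫ x, ‖x‖ ∂ρ)) * Real.sqrt δ + 2 * δ) := by
  have hQg := hQ.integrable_comp hg.aemeasurable hintg
  have hQid : Integrable Q ρ := hQ.integrable_comp aemeasurable_id hint
  have hmin : Integrable (fun x => min ‖g x‖ ‖x‖) ρ := hintg.inf hint
  calc |(∫ x, Q (g x) ∂ρ) - ∫ x, Q x ∂ρ| = |∫ x, (Q (g x) - Q x) ∂ρ| := by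
        rw [integral_sub hQg hQid]
    _ ≤ ∫ x, |Q (g x) - Q x| ∂ρ := abs_integral_le_integral_abs
    _ ≤ ∫ x, C * (Real.sqrt (min ‖g x‖ ‖x‖) * Real.sqrt δ + 2 * δ) ∂ρ :=
        integral_mono_ae (hQg.sub hQid).abs
          (((hmin.sqrt.mul_const _).add (integrable_const _)).const_mul C)
          (hclose.mono fun x hx => hQ.abs_sub_le_of_norm_sub_le hC hx)
    _ = C * ((∫ x, Real.sqrt (min ‖g x‖ ‖x‖) ∂ρ) * Real.sqrt δ + 2 * δ) := by
        rw [integral_const_mul, integral_add (hmin.sqrt.mul_const _) (integrable_const _),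
          integral_mul_const, integral_const, probReal_univ, one_smul]
    _ ≤ C * (Real.sqrt (∫ x, min ‖g x‖ ‖x‖ ∂ρ) * Real.sqrt δ + 2 * δ) := by
        gcongr
        exact integral_sqrt_le_sqrt_integral (ae_of_all _ fun x => by positivity) hmin
    _ ≤ C * (Real.sqrt (min (∫ x, ‖g x‖ ∂ρ) (∫ x, ‖x‖ ∂ρ)) * Real.sqrt δ + 2 * δ) := by
        gcongr
        exact integral_min_le_min_integral hintg hint

/-- Theorem 3.7 (effects on in-sample evaluation): relabeling by a map `g`
moving each point by at most `δ` perturbs the expectation of an NTK-smooth `Q`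
by at most `C(√(min(E‖g x‖, E‖x‖))·√δ + 2δ)`. -/
theorem relabeling_perturbs_expectation {n : ℕ}
    (ρ : Measure (EuclideanSpace ℝ (Fin n))) [IsProbabilityMeasure ρ]
    (δ : ℝ) (hδ : 0 ≤ δ)
    (g : EuclideanSpace ℝ (Fin n) → EuclideanSpace ℝ (Fin n)) (hg : Measurable g)
    (hclose : ∀ᵐ x ∂ρ, ‖g x - x‖ ≤ δ)
    (hint : Integrable (fun x => ‖x‖) ρ)
    (hintg : Integrable (fun x => ‖g x‖) ρ)
    (Q : EuclideanSpace ℝ (Fin n) → ℝ) (C : ℝ) (hC : 0 ≤ C)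
    (hQ : NTKSmooth Q C) :
    |(∫ x, Q (g x) ∂ρ) - ∫ x, Q x ∂ρ| ≤
      C * (Real.sqrt (min (∫ x, ‖g x‖ ∂ρ) (∫ x, ‖x‖ ∂ρ)) * Real.sqrt δ + 2 * δ) :=
  relabeling_perturbs_expectation_general ρ δ g hg hclose hint hintg Q C hC hQ
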